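/- arXiv:math-ph/9906001 — 3 statements merged into one kernel-verified Lean document; each statement's English description precedes it below -/
import Mathlib

section
/- Let m : ℝ^(1+n) → Sym(n,ℝ) be smooth with m(x) symmetric positive definite for every x, let k : ℝ^(1+n) → ℝⁿ and f : ℝ^(1+n) → ℝ be smooth, and consider the non-degenerate quadratic Lagrangian L(t,q,v) = (1/2) Σ_{i,j} m_{ij}(t,q) v^i v^j + Σ_i k_i(t,q) v^i + f(t,q). Define the degenerate fibre metric g on ℝ^(1+n) by g_{00} = 2f, g_{0i} = g_{i0} = k_i, g_{ij} = m_{ij}, and the Christoffel symbols {_{λμν}} = −(1/2)(∂_λ g_{μν} + ∂_ν g_{μλ} − ∂_μ g_{λν}). Then a smooth curve c : ℝ → ℝⁿ satisfies the Euler–Lagrange equations (d/dt)[∂L/∂v^i(t, c(t), ċ(t))] − ∂L/∂q^i(t, c(t), ċ(t)) = 0 for all i and t if and only if c̈^i(t) = Σ_{k,λ,ν} (m(t,c(t))⁻¹)^{ik} {_{λkν}}(t, c(t)) ċ^λ(t) ċ^ν(t) for all i and t, where ċ⁰ := 1 and c⁰(t) := t. -/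
/-!
Half the squared `g`-norm of the extended velocity `(1, v)` is exactly the Lagrangian:
`L(t, q, v) = ½ g_{λν}(t, q) u^λ u^ν` with `u = (1, v)`. For such a Lagrangian the momentum is
`∂L/∂v^i = g_{iν} u^ν`, whose time derivative along `γ = (t, c)` is
`∂_λ g_{iν} γ̇^λ γ̇^ν + m_{ij} c̈^j`, while `∂L/∂q^i = ½ ∂_i g_{λν} γ̇^λ γ̇^ν`. Relabelling the
dummy indices in the Christoffel contraction shows that the Euler–Lagrange expression equals
`m_{ij} c̈^j - {_{λiν}} γ̇^λ γ̇^ν`, and the positive definite `m` can be inverted.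
-/

open Finset
open scoped Matrix

/-- Partial derivative of `f : ℝ^(1+n) → ℝ` in the `μ`-th coordinate direction. -/
noncomputable def pdir {N : ℕ} (f : (Fin N → ℝ) → ℝ) (x : Fin N → ℝ) (μ : Fin N) : ℝ :=
  fderiv ℝ f x (Pi.single μ 1)

section PartialDerivative

variable {N : ℕ}

theorem fderiv_apply_eq_sum_pdir (F : (Fin N → ℝ) → ℝ) (x w : Fin N → ℝ) :
    fderiv ℝ F x w = ∑ μ, w μ * pdir F x μ := by
  conv_lhs => rw [← univ_sum_single w]
  refine (map_sum _ _ _).trans (sum_congr rfl fun μ _ => ?_)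
  rw [pdir, ← smul_eq_mul, ← map_smul, ← Pi.single_smul', smul_eq_mul, mul_one]

theorem hasDerivAt_comp_eq_sum_pdir {F : (Fin N → ℝ) → ℝ} {u : ℝ → Fin N → ℝ}
    {u' : Fin N → ℝ} {t : ℝ} (hF : DifferentiableAt ℝ F (u t)) (hu : HasDerivAt u u' t) :
    HasDerivAt (fun s => F (u s)) (∑ μ, u' μ * pdir F (u t) μ) t := by
  have h := hF.hasFDerivAt.comp_hasDerivAt t hu
  rwa [fderiv_apply_eq_sum_pdir] at h

theorem fderiv_comp_finCons_single {F : (Fin (N + 1) → ℝ) → ℝ} {t : ℝ} {q : Fin N → ℝ}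
    (hF : DifferentiableAt ℝ F (Fin.cons t q)) (i : Fin N) :
    fderiv ℝ (fun q => F (Fin.cons t q)) q (Pi.single i 1) = pdir F (Fin.cons t q) i.succ := by
  have hcons : HasFDerivAt (fun q : Fin N → ℝ => (Fin.cons t q : Fin (N + 1) → ℝ))
      ((0 : (Fin N → ℝ) →L[ℝ] ℝ).finCons (ContinuousLinearMap.id ℝ _)) q :=
    (hasFDerivAt_const t q).finCons (hasFDerivAt_id q)
  rw [show (fun q => F (Fin.cons t q)) = F ∘ fun q => Fin.cons t q from rfl,
    (hF.hasFDerivAt.comp q hcons).fderiv, ContinuousLinearMap.comp_apply, pdir]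
  congr 1
  ext j
  cases j using Fin.cases with
  | zero => simp [Fin.consEquivL_apply, (Fin.succ_ne_zero i).symm]
  | succ j => simp [Fin.consEquivL_apply, Pi.single_apply]

theorem pdir_const_mul {F : (Fin N → ℝ) → ℝ} {x : Fin N → ℝ} (hF : DifferentiableAt ℝ F x)
    (a : ℝ) (μ : Fin N) : pdir (fun y => a * F y) x μ = a * pdir F x μ := by
  simp [pdir, fderiv_const_mul hF]

theorem pdir_sum_sum_mul_const_mul_const {M : ℕ} {x : Fin N → ℝ}
    (a : (Fin N → ℝ) → Fin M → Fin M → ℝ) (ha : ∀ μ ν, DifferentiableAt ℝ (fun y => a y μ ν) x)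
    (u : Fin M → ℝ) (κ : Fin N) :
    pdir (fun y => ∑ μ, ∑ ν, a y μ ν * u μ * u ν) x κ
      = ∑ μ, ∑ ν, pdir (fun y => a y μ ν) x κ * u μ * u ν := by
  have h : HasFDerivAt (fun y => ∑ μ, ∑ ν, a y μ ν * u μ * u ν)
      (∑ μ, ∑ ν, u ν • u μ • fderiv ℝ (fun y => a y μ ν) x) x :=
    HasFDerivAt.fun_sum fun μ _ => HasFDerivAt.fun_sum fun ν _ =>
      ((ha μ ν).hasFDerivAt.mul_const (u μ)).mul_const (u ν)
  simp only [pdir, h.fderiv, FunLike.coe_sum, Finset.sum_apply, FunLike.coe_smul, Pi.smul_apply,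
    smul_eq_mul]
  exact sum_congr rfl fun μ _ => sum_congr rfl fun ν _ => by ring

theorem pdir_sum_sum_const_mul_mul {a : Fin N → Fin N → ℝ} (ha : ∀ μ ν, a μ ν = a ν μ)
    (u : Fin N → ℝ) (κ : Fin N) :
    pdir (fun u => ∑ μ, ∑ ν, a μ ν * u μ * u ν) u κ = 2 * ∑ ν, a κ ν * u ν := by
  have h : HasFDerivAt (fun u : Fin N → ℝ => ∑ μ, ∑ ν, a μ ν * u μ * u ν)
      (∑ μ, ∑ ν, a μ ν • (u μ • ContinuousLinearMap.proj (R := ℝ) (φ := fun _ : Fin N => ℝ) ν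
        + u ν • ContinuousLinearMap.proj (R := ℝ) (φ := fun _ : Fin N => ℝ) μ)) u := by
    refine HasFDerivAt.fun_sum fun μ _ => HasFDerivAt.fun_sum fun ν _ => ?_
    simpa only [mul_assoc] using
      ((hasFDerivAt_apply μ u).fun_mul (hasFDerivAt_apply ν u)).const_mul (a μ ν)
  simp only [pdir, h.fderiv, FunLike.coe_sum, Finset.sum_apply, FunLike.coe_smul, Pi.smul_apply,
    smul_eq_mul]
  simp [Pi.single_apply, sum_add_distrib, mul_add, ha, two_mul]

end PartialDerivative

theorem Matrix.mulVec_eq_iff_eq_inv_mulVec {ι K : Type*} [Fintype ι] [DecidableEq ι] [Field K]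
    {M : Matrix ι ι K} (hM : IsUnit M) (x b : ι → K) : M *ᵥ x = b ↔ x = M⁻¹ *ᵥ b := by
  have := hM.invertible
  constructor
  · rintro rfl
    rw [mulVec_mulVec, inv_mul_of_invertible, one_mulVec]
  · rintro rfl
    rw [mulVec_mulVec, mul_inv_of_invertible, one_mulVec]

section Christoffel

variable {N : ℕ}

noncomputable def christoffel (g : (Fin N → ℝ) → Fin N → Fin N → ℝ) (x : Fin N → ℝ)
    (lam μ ν : Fin N) : ℝ :=
  -(1 / 2) * (pdir (fun y => g y μ ν) x lam + pdir (fun y => g y μ lam) x ν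
    - pdir (fun y => g y lam ν) x μ)

theorem sum_christoffel_mul_mul (g : (Fin N → ℝ) → Fin N → Fin N → ℝ) (x : Fin N → ℝ)
    (μ : Fin N) (u : Fin N → ℝ) :
    ∑ lam, ∑ ν, christoffel g x lam μ ν * u lam * u ν
      = 1 / 2 * ∑ lam, ∑ ν, pdir (fun y => g y lam ν) x μ * u lam * u ν
        - ∑ lam, ∑ ν, pdir (fun y => g y μ ν) x lam * u lam * u ν := by
  have hswap : ∑ lam, ∑ ν, pdir (fun y => g y μ lam) x ν * u lam * u ν
      = ∑ lam, ∑ ν, pdir (fun y => g y μ ν) x lam * u lam * u ν := by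
    rw [sum_comm]
    exact sum_congr rfl fun _ _ => sum_congr rfl fun _ _ => by ring
  have hexpand : ∀ lam ν, christoffel g x lam μ ν * u lam * u ν
      = -(1 / 2) * (pdir (fun y => g y μ ν) x lam * u lam * u ν)
        + -(1 / 2) * (pdir (fun y => g y μ lam) x ν * u lam * u ν)
        + 1 / 2 * (pdir (fun y => g y lam ν) x μ * u lam * u ν) := by
    intro lam ν
    rw [christoffel]
    ring
  simp only [hexpand, sum_add_distrib, ← mul_sum, hswap]
  ring

end Christoffel

section MetricLagrangian

variable {n : ℕ}

noncomputable def metricLagrangian (g : (Fin (n + 1) → ℝ) → Fin (n + 1) → Fin (n + 1) → ℝ)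
    (t : ℝ) (q v : Fin n → ℝ) : ℝ :=
  1 / 2 * ∑ lam, ∑ ν, g (Fin.cons t q) lam ν * (Fin.cons 1 v : Fin (n + 1) → ℝ) lam
    * (Fin.cons 1 v : Fin (n + 1) → ℝ) ν

noncomputable def eulerLagrange (L : ℝ → (Fin n → ℝ) → (Fin n → ℝ) → ℝ) (c : ℝ → Fin n → ℝ)
    (i : Fin n) (t : ℝ) : ℝ :=
  deriv (fun s => fderiv ℝ (L s (c s)) (deriv c s) (Pi.single i 1)) t
    - fderiv ℝ (fun q => L t q (deriv c t)) (c t) (Pi.single i 1)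

theorem hasDerivAt_graph {c : ℝ → Fin n → ℝ} {t : ℝ} (hc : DifferentiableAt ℝ c t) :
    HasDerivAt (fun s => (Fin.cons s (c s) : Fin (n + 1) → ℝ)) (Fin.cons 1 (deriv c t)) t :=
  (hasDerivAt_id t).finCons hc.hasDerivAt

variable {g : (Fin (n + 1) → ℝ) → Fin (n + 1) → Fin (n + 1) → ℝ}

theorem fderiv_metricLagrangian_velocity (hsymm : ∀ x μ ν, g x μ ν = g x ν μ) (t : ℝ)
    (q v : Fin n → ℝ) (i : Fin n) :
    fderiv ℝ (metricLagrangian g t q) v (Pi.single i 1)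
      = ∑ ν, g (Fin.cons t q) i.succ ν * (Fin.cons 1 v : Fin (n + 1) → ℝ) ν := by
  set Q := fun u : Fin (n + 1) → ℝ => ∑ lam, ∑ ν, g (Fin.cons t q) lam ν * u lam * u ν
  have hQ : Differentiable ℝ Q := by fun_prop
  rw [show metricLagrangian g t q = fun v => 1 / 2 * Q (Fin.cons 1 v) from rfl,
    fderiv_comp_finCons_single (F := fun u => 1 / 2 * Q u) (by fun_prop),
    pdir_const_mul (hQ _), pdir_sum_sum_const_mul_mul (hsymm _)]
  ring

theorem fderiv_metricLagrangian_position (hg : ∀ μ ν, Differentiable ℝ fun x => g x μ ν)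
    (t : ℝ) (q v : Fin n → ℝ) (i : Fin n) :
    fderiv ℝ (fun q => metricLagrangian g t q v) q (Pi.single i 1)
      = 1 / 2 * ∑ lam, ∑ ν, pdir (fun y => g y lam ν) (Fin.cons t q) i.succ
          * (Fin.cons 1 v : Fin (n + 1) → ℝ) lam * (Fin.cons 1 v : Fin (n + 1) → ℝ) ν := by
  set u : Fin (n + 1) → ℝ := Fin.cons 1 v
  set Q := fun y => ∑ lam, ∑ ν, g y lam ν * u lam * u ν
  have hQ : Differentiable ℝ Q := by fun_prop
  rw [show (fun q => metricLagrangian g t q v) = fun q => 1 / 2 * Q (Fin.cons t q) from rfl,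
    fderiv_comp_finCons_single (F := fun y => 1 / 2 * Q y) (by fun_prop),
    pdir_const_mul (hQ _), pdir_sum_sum_mul_const_mul_const _ fun μ ν => (hg μ ν).differentiableAt]

theorem eulerLagrange_metricLagrangian (hg : ∀ μ ν, Differentiable ℝ fun x => g x μ ν)
    (hsymm : ∀ x μ ν, g x μ ν = g x ν μ) {c : ℝ → Fin n → ℝ} (hc : Differentiable ℝ c)
    (hc' : Differentiable ℝ (deriv c)) (i : Fin n) (t : ℝ) :
    eulerLagrange (metricLagrangian g) c i t
      = ∑ j, g (Fin.cons t (c t)) i.succ j.succ * deriv (deriv c) t j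
        - ∑ lam, ∑ ν, christoffel g (Fin.cons t (c t)) lam i.succ ν
            * (Fin.cons 1 (deriv c t) : Fin (n + 1) → ℝ) lam
            * (Fin.cons 1 (deriv c t) : Fin (n + 1) → ℝ) ν := by
  set γ : ℝ → Fin (n + 1) → ℝ := fun s => Fin.cons s (c s)
  set u : ℝ → Fin (n + 1) → ℝ := fun s => Fin.cons 1 (deriv c s)
  have hγ : HasDerivAt γ (u t) t := hasDerivAt_graph (hc t)
  have hu : HasDerivAt u (Fin.cons 0 (deriv (deriv c) t)) t :=
    (hasDerivAt_const t 1).finCons (hc' t).hasDerivAt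
  have hmomentum : HasDerivAt (fun s => ∑ ν, g (γ s) i.succ ν * u s ν)
      (∑ ν, ((∑ lam, u t lam * pdir (fun x => g x i.succ ν) (γ t) lam) * u t ν
        + g (γ t) i.succ ν * (Fin.cons 0 (deriv (deriv c) t) : Fin (n + 1) → ℝ) ν)) t :=
    HasDerivAt.fun_sum fun ν _ =>
      (hasDerivAt_comp_eq_sum_pdir (hg _ _).differentiableAt hγ).mul (hasDerivAt_pi.1 hu ν)
  have hacc : ∑ ν, g (γ t) i.succ ν * (Fin.cons 0 (deriv (deriv c) t) : Fin (n + 1) → ℝ) ν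
      = ∑ j, g (γ t) i.succ j.succ * deriv (deriv c) t j := by
    simp [Fin.sum_univ_succ]
  have htransport : ∑ ν, (∑ lam, u t lam * pdir (fun x => g x i.succ ν) (γ t) lam) * u t ν
      = ∑ lam, ∑ ν, pdir (fun y => g y i.succ ν) (γ t) lam * u t lam * u t ν := by
    simp only [sum_mul]
    rw [sum_comm]
    exact sum_congr rfl fun _ _ => sum_congr rfl fun _ _ => by ring
  rw [eulerLagrange]
  simp only [fderiv_metricLagrangian_velocity hsymm, fderiv_metricLagrangian_position hg]
  rw [hmomentum.deriv, sum_add_distrib, hacc, htransport, sum_christoffel_mul_mul]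
  ring

end MetricLagrangian

section LagrangeMetric

variable {n : ℕ}

noncomputable def lagrangeMetric (m : (Fin (n + 1) → ℝ) → Matrix (Fin n) (Fin n) ℝ)
    (k : (Fin (n + 1) → ℝ) → Fin n → ℝ) (f : (Fin (n + 1) → ℝ) → ℝ) (x : Fin (n + 1) → ℝ) :
    Fin (n + 1) → Fin (n + 1) → ℝ :=
  Matrix.vecCons (Matrix.vecCons (2 * f x) (k x)) fun i => Matrix.vecCons (k x i) (m x i)

variable {m : (Fin (n + 1) → ℝ) → Matrix (Fin n) (Fin n) ℝ}
  {k : (Fin (n + 1) → ℝ) → Fin n → ℝ} {f : (Fin (n + 1) → ℝ) → ℝ}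

theorem eq_lagrangeMetric {g : (Fin (n + 1) → ℝ) → Fin (n + 1) → Fin (n + 1) → ℝ}
    (hg00 : ∀ x, g x 0 0 = 2 * f x) (hg0i : ∀ x (i : Fin n), g x 0 i.succ = k x i)
    (hgi0 : ∀ x (i : Fin n), g x i.succ 0 = k x i)
    (hgij : ∀ x (i j : Fin n), g x i.succ j.succ = m x i j) :
    g = lagrangeMetric m k f := by
  funext x μ ν
  cases μ using Fin.cases <;> cases ν using Fin.cases <;>
    simp [lagrangeMetric, hg00, hg0i, hgi0, hgij]

theorem lagrangeMetric_symm (hm : ∀ x, (m x).IsSymm) (x : Fin (n + 1) → ℝ) (μ ν : Fin (n + 1)) :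
    lagrangeMetric m k f x μ ν = lagrangeMetric m k f x ν μ := by
  cases μ using Fin.cases <;> cases ν using Fin.cases <;>
    simp [lagrangeMetric, (hm x).apply]

theorem differentiable_lagrangeMetric (hm : ∀ i j, Differentiable ℝ fun x => m x i j)
    (hk : Differentiable ℝ k) (hf : Differentiable ℝ f) (μ ν : Fin (n + 1)) :
    Differentiable ℝ fun x => lagrangeMetric m k f x μ ν := by
  cases μ using Fin.cases <;> cases ν using Fin.cases <;>
    simp only [lagrangeMetric, Matrix.cons_val_zero, Matrix.cons_val_succ] <;> fun_prop

theorem metricLagrangian_lagrangeMetric (t : ℝ) (q v : Fin n → ℝ) :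
    metricLagrangian (lagrangeMetric m k f) t q v
      = 1 / 2 * ∑ i, ∑ j, m (Fin.cons t q) i j * v i * v j + ∑ i, k (Fin.cons t q) i * v i
        + f (Fin.cons t q) := by
  simp only [metricLagrangian, lagrangeMetric, Fin.sum_univ_succ, Matrix.cons_val_zero,
    Matrix.cons_val_succ, Fin.cons_zero, Fin.cons_succ, mul_one, sum_add_distrib]
  ring

end LagrangeMetric

/-- the Euler–Lagrange equations of the non-degenerate quadratic
Lagrangian `L = (1/2) m_{ij} v^i v^j + k_i v^i + f` are equivalent to the
geodesic-type equation `c̈^i = (m⁻¹)^{ik} {_{λkν}} ċ^λ ċ^ν` (with `ċ⁰ = 1`),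
where `{_{λμν}}` are the Christoffel symbols of the degenerate metric `g` with
`g_{00} = 2f`, `g_{0i} = k_i`, `g_{ij} = m_{ij}`. -/
theorem lagrange_equation_iff_geodesic (n : ℕ)
    (m : (Fin (n + 1) → ℝ) → Matrix (Fin n) (Fin n) ℝ)
    (hm : ∀ i j, ContDiff ℝ (⊤ : ℕ∞) fun x => m x i j)
    (hmpos : ∀ x, (m x).PosDef)
    (k : (Fin (n + 1) → ℝ) → Fin n → ℝ) (hk : ContDiff ℝ (⊤ : ℕ∞) k)
    (f : (Fin (n + 1) → ℝ) → ℝ) (hf : ContDiff ℝ (⊤ : ℕ∞) f)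
    (L : ℝ → (Fin n → ℝ) → (Fin n → ℝ) → ℝ)
    (hL : ∀ (t : ℝ) (q v : Fin n → ℝ),
      L t q v = (1 / 2) * (∑ i : Fin n, ∑ j : Fin n, m (Fin.cons t q) i j * v i * v j)
        + (∑ i : Fin n, k (Fin.cons t q) i * v i) + f (Fin.cons t q))
    (g : (Fin (n + 1) → ℝ) → Fin (n + 1) → Fin (n + 1) → ℝ)
    (hg00 : ∀ x, g x 0 0 = 2 * f x)
    (hg0i : ∀ x (i : Fin n), g x 0 i.succ = k x i)
    (hgi0 : ∀ x (i : Fin n), g x i.succ 0 = k x i)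
    (hgij : ∀ x (i j : Fin n), g x i.succ j.succ = m x i j)
    (Chris : (Fin (n + 1) → ℝ) → Fin (n + 1) → Fin (n + 1) → Fin (n + 1) → ℝ)
    (hChris : ∀ x (lam μ ν : Fin (n + 1)),
      Chris x lam μ ν = -(1 / 2) * (pdir (fun y => g y μ ν) x lam
        + pdir (fun y => g y μ lam) x ν - pdir (fun y => g y lam ν) x μ))
    (c : ℝ → Fin n → ℝ) (hc : ContDiff ℝ (⊤ : ℕ∞) c)
    (γ : ℝ → Fin (n + 1) → ℝ) (hγ : ∀ t, γ t = Fin.cons t (c t)) :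
    (∀ (i : Fin n) (t : ℝ),
      deriv (fun s => fderiv ℝ (L s (c s)) (deriv c s) (Pi.single i 1)) t
        - fderiv ℝ (fun q => L t q (deriv c t)) (c t) (Pi.single i 1) = 0) ↔
    (∀ (i : Fin n) (t : ℝ),
      deriv (deriv c) t i = ∑ k' : Fin n, ∑ lam : Fin (n + 1), ∑ ν : Fin (n + 1),
        (m (γ t))⁻¹ i k' * Chris (γ t) lam k'.succ ν * deriv γ t lam * deriv γ t ν) := by
  obtain rfl : g = lagrangeMetric m k f := eq_lagrangeMetric hg00 hg0i hgi0 hgij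
  obtain rfl : L = metricLagrangian (lagrangeMetric m k f) := by
    funext t q v
    rw [hL, metricLagrangian_lagrangeMetric]
  obtain rfl : Chris = christoffel (lagrangeMetric m k f) := by
    funext x lam μ ν
    exact hChris x lam μ ν
  obtain rfl : γ = fun t => (Fin.cons t (c t) : Fin (n + 1) → ℝ) := funext hγ
  have hm_symm (x) : (m x).IsSymm := Matrix.isHermitian_iff_isSymm.1 (hmpos x).isHermitian
  have hEL := eulerLagrange_metricLagrangian
    (differentiable_lagrangeMetric (fun i j => (hm i j).differentiable (by simp))
      (hk.differentiable (by simp)) (hf.differentiable (by simp)))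
    (lagrangeMetric_symm hm_symm) (hc.differentiable (by simp))
    ((contDiff_infty_iff_deriv.1 hc).2.differentiable (by simp))
  have hγ' t := (hasDerivAt_graph (hc.differentiable (by simp) t)).deriv
  show (∀ i t, eulerLagrange (metricLagrangian (lagrangeMetric m k f)) c i t = 0) ↔ _
  rw [forall_comm, forall_comm (α := Fin n)]
  refine forall_congr' fun t => ?_
  simp only [hEL, sub_eq_zero, hγ', hgij]
  have := Matrix.mulVec_eq_iff_eq_inv_mulVec (hmpos (Fin.cons t (c t))).isUnit (deriv (deriv c) t)
    fun i => ∑ lam, ∑ ν, christoffel (lagrangeMetric m k f) (Fin.cons t (c t)) lam i.succ ν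
      * (Fin.cons 1 (deriv c t) : Fin (n + 1) → ℝ) lam
      * (Fin.cons 1 (deriv c t) : Fin (n + 1) → ℝ) ν
  simpa only [funext_iff, Matrix.mulVec, dotProduct, mul_sum, ← mul_assoc] using this
end

section
/- Let m : ℝ^(1+n) → Sym(n,ℝ) be smooth with m(x) symmetric positive definite, let k : ℝ^(1+n) → ℝⁿ and f : ℝ^(1+n) → ℝ be smooth. Define g_{00} = 2f, g_{0i} = k_i, g_{ij} = m_{ij}, the Christoffel symbols {_{λμν}} = −(1/2)(∂_λ g_{μν} + ∂_ν g_{μλ} − ∂_μ g_{λν}), and the linear connection components K_λ⁰_ν := 0 and K_λ^i_ν := Σ_k (m⁻¹)^{ik} {_{λkν}}. Then for all λ = 0,…,n and all i, j = 1,…,n, the compatibility identity ∂_λ m_{ij} + Σ_k ( m_{ik} K_λ^k_j + m_{jk} K_λ^k_i ) = 0 holds identically on ℝ^(1+n). -/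
/-- for the linear connection `K_λ⁰_ν = 0`,
`K_λ^i_ν = (m⁻¹)^{ik} {_{λkν}}` built from the Christoffel symbols of the
degenerate metric `g_{00} = 2f, g_{0i} = k_i, g_{ij} = m_{ij}`, the Newtonian
compatibility identity `∂_λ m_{ij} + m_{ik} K_λ^k_j + m_{jk} K_λ^k_i = 0`
holds identically. -/
theorem lagrangian_connection_compatibility (n : ℕ)
    (m : (Fin (n + 1) → ℝ) → Matrix (Fin n) (Fin n) ℝ)
    (hm : ∀ i j, ContDiff ℝ (⊤ : ℕ∞) fun x => m x i j)
    (hmpos : ∀ x, (m x).PosDef)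
    (k : (Fin (n + 1) → ℝ) → Fin n → ℝ) (hk : ContDiff ℝ (⊤ : ℕ∞) k)
    (f : (Fin (n + 1) → ℝ) → ℝ) (hf : ContDiff ℝ (⊤ : ℕ∞) f)
    (g : (Fin (n + 1) → ℝ) → Fin (n + 1) → Fin (n + 1) → ℝ)
    (hg00 : ∀ x, g x 0 0 = 2 * f x)
    (hg0i : ∀ x (i : Fin n), g x 0 i.succ = k x i)
    (hgi0 : ∀ x (i : Fin n), g x i.succ 0 = k x i)
    (hgij : ∀ x (i j : Fin n), g x i.succ j.succ = m x i j)
    (Chris : (Fin (n + 1) → ℝ) → Fin (n + 1) → Fin (n + 1) → Fin (n + 1) → ℝ)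
    (hChris : ∀ x (lam μ ν : Fin (n + 1)),
      Chris x lam μ ν = -(1 / 2) * (pdir (fun y => g y μ ν) x lam
        + pdir (fun y => g y μ lam) x ν - pdir (fun y => g y lam ν) x μ))
    (K : (Fin (n + 1) → ℝ) → Fin (n + 1) → Fin (n + 1) → Fin (n + 1) → ℝ)
    (hKtemp : ∀ x (lam ν : Fin (n + 1)), K x lam 0 ν = 0)
    (hKi : ∀ x (lam : Fin (n + 1)) (i : Fin n) (ν : Fin (n + 1)),
      K x lam i.succ ν = ∑ k' : Fin n, (m x)⁻¹ i k' * Chris x lam k'.succ ν) :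
    ∀ (x : Fin (n + 1) → ℝ) (lam : Fin (n + 1)) (i j : Fin n),
      pdir (fun y => m y i j) x lam
        + ∑ k' : Fin n, (m x i k' * K x lam k'.succ j.succ
            + m x j k' * K x lam k'.succ i.succ) = 0 := by
  intro x lam i j
  have hdet : IsUnit (m x).det := isUnit_iff_ne_zero.mpr (hmpos x).det_pos.ne'
  have hinv : m x * (m x)⁻¹ = 1 := Matrix.mul_nonsing_inv _ hdet
  have key : ∀ (a : Fin n) (ν : Fin (n + 1)),
      ∑ k' : Fin n, m x a k' * K x lam k'.succ ν = Chris x lam a.succ ν := by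
    intro a ν
    calc ∑ k' : Fin n, m x a k' * K x lam k'.succ ν
        = ∑ k' : Fin n, ∑ k'' : Fin n,
            m x a k' * ((m x)⁻¹ k' k'' * Chris x lam k''.succ ν) := by
          simp [hKi, Finset.mul_sum]
      _ = ∑ k'' : Fin n, (∑ k' : Fin n, m x a k' * (m x)⁻¹ k' k'')
            * Chris x lam k''.succ ν := by
          rw [Finset.sum_comm]
          simp [Finset.sum_mul, mul_assoc]
      _ = ∑ k'' : Fin n, (1 : Matrix (Fin n) (Fin n) ℝ) a k''
            * Chris x lam k''.succ ν := by
          simp only [← Matrix.mul_apply, hinv]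
      _ = Chris x lam a.succ ν := by
          simp [Matrix.one_apply]
  have msym : ∀ (y : Fin (n + 1) → ℝ) (a b : Fin n), m y a b = m y b a := by
    intro y a b
    have := congrFun (congrFun (hmpos y).isHermitian b) a
    simpa using this
  have gsym : ∀ (μ ν : Fin (n + 1)), (fun y => g y μ ν) = fun y => g y ν μ := by
    intro μ ν
    funext y
    induction μ using Fin.cases with
    | zero =>
      induction ν using Fin.cases with
      | zero => rfl
      | succ b => rw [hg0i, hgi0]
    | succ a =>
      induction ν using Fin.cases with
      | zero => rw [hg0i, hgi0]
      | succ b => rw [hgij, hgij, msym]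
  have hCsum : Chris x lam i.succ j.succ + Chris x lam j.succ i.succ
      = -pdir (fun y => m y i j) x lam := by
    rw [hChris, hChris]
    have e1 : (fun y => g y j.succ i.succ) = fun y => g y i.succ j.succ := gsym _ _
    have e2 : (fun y => g y j.succ lam) = fun y => g y lam j.succ := gsym _ _
    have e3 : (fun y => g y i.succ lam) = fun y => g y lam i.succ := gsym _ _
    have e4 : (fun y => g y i.succ j.succ) = fun y => m y i j :=
      funext fun y => hgij y i j
    rw [e1, e2, e3, e4]
    ring
  rw [Finset.sum_add_distrib, key i j.succ, key j i.succ]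
  linarith [hCsum]
end

section
/- Let m : ℝ^(1+n) → Sym(n,ℝ) be smooth with m(x) symmetric positive definite, and let K_λ^α_ν : ℝ^(1+n) → ℝ be smooth linear connection components with K_λ⁰_ν ≡ 0 satisfying the compatibility identity ∂_λ m_{ij} + Σ_k (m_{ik} K_λ^k_j + m_{jk} K_λ^k_i) = 0 for all λ, i, j. Let γ : ℝ → ℝ^(1+n) be a geodesic of K with γ̇⁰ ≡ 1, and let u be a Jacobi field along γ such that u⁰ ≡ 0 and u(a) = u(b) = 0 for some a < b. Then ∫_a^b [ Σ_{i,j} m_{ij}(γ(t)) (∇_{γ̇}u)^i(t) (∇_{γ̇}u)^j(t) + Σ_{i,j,λ,μ,ν} m_{ij}(γ(t)) R_{λμ}^i_ν(γ(t)) u^λ(t) u^j(t) γ̇^μ(t) γ̇^ν(t) ] dt = 0. -/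
/-- Curvature tensor `R_{λμ}^α_β` of a linear connection with components
`K_λ^α_ν : ℝ^(1+n) → ℝ`. -/
noncomputable def curvR {n : ℕ}
    (K : Fin (n + 1) → Fin (n + 1) → Fin (n + 1) → (Fin (n + 1) → ℝ) → ℝ)
    (lam μ α β : Fin (n + 1)) (x : Fin (n + 1) → ℝ) : ℝ :=
  pdir (K μ α β) x lam - pdir (K lam α β) x μ
    + ∑ g : Fin (n + 1), (K lam g β x * K μ α g x - K μ g β x * K lam α g x)

/-- Covariant derivative along a curve `γ` of a vector field `w` along `γ`,
for a linear connection with components `K_μ^α_ν`. -/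
noncomputable def covD {n : ℕ}
    (K : Fin (n + 1) → Fin (n + 1) → Fin (n + 1) → (Fin (n + 1) → ℝ) → ℝ)
    (γ w : ℝ → Fin (n + 1) → ℝ) : ℝ → Fin (n + 1) → ℝ :=
  fun t α => deriv (fun s => w s α) t
    - ∑ μ : Fin (n + 1), ∑ ν : Fin (n + 1), K μ α ν (γ t) * deriv γ t μ * w t ν

/-! The integrand is the derivative of `t ↦ ⟨∇u, u⟩_m` along `γ`. Compatibility of `K` with `m`
gives the Leibniz rule `d/dt ⟨V, W⟩_m = ⟨∇V, W⟩_m + ⟨V, ∇W⟩_m` for fields with vanishing temporal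
component (as `∇u` has, because `K_λ⁰_ν = 0`), and the Jacobi equation turns `⟨∇∇u, u⟩_m` into the
curvature term. Since `u` vanishes at `a` and `b`, the integral is zero. -/

open Finset

theorem hasDerivAt_comp_eq_sum_pdir_s10 {N : ℕ} {f : (Fin N → ℝ) → ℝ} {γ : ℝ → Fin N → ℝ} {t : ℝ}
    (hf : DifferentiableAt ℝ f (γ t)) (hγ : DifferentiableAt ℝ γ t) :
    HasDerivAt (fun s => f (γ s)) (∑ lam, deriv γ t lam * pdir f (γ t) lam) t := by
  have h := hf.hasFDerivAt.comp_hasDerivAt t hγ.hasDerivAt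
  rw [pi_eq_sum_univ' (deriv γ t), map_sum] at h
  simp only [map_smul, smul_eq_mul] at h
  exact h

section Connection

variable {n : ℕ} {K : Fin (n + 1) → Fin (n + 1) → Fin (n + 1) → (Fin (n + 1) → ℝ) → ℝ}
  {γ w : ℝ → Fin (n + 1) → ℝ}

theorem hasDerivAt_apply_covD {t : ℝ} {α : Fin (n + 1)}
    (hw : DifferentiableAt ℝ (fun s => w s α) t) :
    HasDerivAt (fun s => w s α)
      (covD K γ w t α + ∑ μ, ∑ ν, K μ α ν (γ t) * deriv γ t μ * w t ν) t := by
  simpa [covD] using hw.hasDerivAt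

theorem covD_apply_zero (hK0 : ∀ lam ν x, K lam 0 ν x = 0) (hw0 : ∀ s, w s 0 = 0) (t : ℝ) :
    covD K γ w t 0 = 0 := by
  simp [covD, hK0, funext hw0]

theorem contDiff_covD (hK : ∀ lam α ν, ContDiff ℝ (⊤ : ℕ∞) (K lam α ν))
    (hγ : ContDiff ℝ (⊤ : ℕ∞) γ) (hw : ContDiff ℝ (⊤ : ℕ∞) w) :
    ContDiff ℝ (⊤ : ℕ∞) (covD K γ w) := by
  have hvel := contDiff_pi.mp (contDiff_infty_iff_deriv.mp hγ).2
  refine contDiff_pi.mpr fun α => ?_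
  refine (contDiff_infty_iff_deriv.mp (contDiff_pi.mp hw α)).2.sub ?_
  exact ContDiff.sum fun μ _ => ContDiff.sum fun ν _ =>
    (((hK μ α ν).comp hγ).mul (hvel μ)).mul (contDiff_pi.mp hw ν)

end Connection

theorem sum_connection_eq_sum_succ {R : Type*} [Semiring R] {n : ℕ}
    (k : Fin (n + 1) → Fin (n + 1) → Fin (n + 1) → R) (g w : Fin (n + 1) → R) (hw : w 0 = 0)
    (α : Fin (n + 1)) :
    ∑ μ, ∑ ν, k μ α ν * g μ * w ν = ∑ c : Fin n, (∑ μ, k μ α c.succ * g μ) * w c.succ := by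
  simp only [Fin.sum_univ_succ (f := fun ν => _ * w ν), hw, mul_zero, zero_add, sum_mul]
  exact sum_comm

theorem sum_comm_outer_inner {ι κ M : Type*} [Fintype ι] [Fintype κ] [AddCommMonoid M]
    (f : ι → κ → ι → M) :
    ∑ i, ∑ j, ∑ c, f i j c = ∑ i, ∑ j, ∑ c, f c j i := by
  calc _ = ∑ j, ∑ i, ∑ c, f i j c := sum_comm
    _ = ∑ j, ∑ c, ∑ i, f i j c := sum_congr rfl fun _ _ => sum_comm
    _ = _ := sum_comm

/-- The product rule for `M_ij v^i w^j` with `Ṁ = -(M B + (M B)ᵀ)`, `v̇ = v' + B v`, `ẇ = w' + B w`: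
the connection terms cancel. -/
theorem sum_mass_connection_cancel {R : Type*} [CommRing R] {n : ℕ}
    (M : Matrix (Fin n) (Fin n) R) (hM : M.IsSymm) (B : Matrix (Fin n) (Fin n) R)
    (v w v' w' : Fin n → R) :
    ∑ i, ∑ j, (((-∑ c, (M i c * B c j + M j c * B c i)) * v i + M i j * (v' i + ∑ c, B i c * v c))
        * w j + M i j * v i * (w' j + ∑ c, B j c * w c))
      = ∑ i, ∑ j, M i j * v' i * w j + ∑ i, ∑ j, M i j * v i * w' j := by
  have hvB :
      ∑ i, ∑ j, ∑ c, M i j * B i c * v c * w j = ∑ i, ∑ j, ∑ c, M j c * B c i * v i * w j := by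
    rw [sum_comm_outer_inner]
    exact sum_congr rfl fun i _ => sum_congr rfl fun j _ => sum_congr rfl fun c _ => by
      rw [hM.apply c j]
  have hwB :
      ∑ i, ∑ j, ∑ c, M i j * v i * B j c * w c = ∑ i, ∑ j, ∑ c, M i c * B c j * v i * w j := by
    refine sum_congr rfl fun i _ => ?_
    rw [sum_comm]
    exact sum_congr rfl fun j _ => sum_congr rfl fun c _ => by ring
  simp only [mul_add, add_mul, neg_mul, mul_sum, sum_mul, sum_add_distrib, sum_neg_distrib]
  simp only [← mul_assoc] at hvB hwB ⊢
  linear_combination hvB + hwB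

def spatialPairing {n : ℕ} (M : Matrix (Fin n) (Fin n) ℝ) (V W : Fin (n + 1) → ℝ) : ℝ :=
  ∑ i, ∑ j, M i j * V i.succ * W j.succ

theorem hasDerivAt_spatialPairing {n : ℕ} {m : (Fin (n + 1) → ℝ) → Matrix (Fin n) (Fin n) ℝ}
    {K : Fin (n + 1) → Fin (n + 1) → Fin (n + 1) → (Fin (n + 1) → ℝ) → ℝ}
    (hsymm : ∀ x, (m x).IsSymm)
    (hcompat : ∀ (x : Fin (n + 1) → ℝ) (lam : Fin (n + 1)) (i j : Fin n),
      pdir (fun y => m y i j) x lam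
        + ∑ k : Fin n, (m x i k * K lam k.succ j.succ x + m x j k * K lam k.succ i.succ x) = 0)
    {γ V W : ℝ → Fin (n + 1) → ℝ} {t : ℝ}
    (hm : ∀ i j, DifferentiableAt ℝ (fun x => m x i j) (γ t)) (hγ : DifferentiableAt ℝ γ t)
    (hV : ∀ α, DifferentiableAt ℝ (fun s => V s α) t)
    (hW : ∀ α, DifferentiableAt ℝ (fun s => W s α) t)
    (hV0 : V t 0 = 0) (hW0 : W t 0 = 0) :
    HasDerivAt (fun s => spatialPairing (m (γ s)) (V s) (W s))
      (spatialPairing (m (γ t)) (covD K γ V t) (W t)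
        + spatialPairing (m (γ t)) (V t) (covD K γ W t)) t := by
  -- spatial block of `K` contracted with `γ̇`; compatibility reads `d/dt m(γ) = -(m B + (m B)ᵀ)`
  set B : Matrix (Fin n) (Fin n) ℝ := fun c j => ∑ μ, K μ c.succ j.succ (γ t) * deriv γ t μ
  have hmass : ∀ i j, HasDerivAt (fun s => m (γ s) i j)
      (-∑ c, (m (γ t) i c * B c j + m (γ t) j c * B c i)) t := by
    intro i j
    convert hasDerivAt_comp_eq_sum_pdir_s10 (hm i j) hγ using 1
    simp only [fun lam => eq_neg_of_add_eq_zero_left (hcompat (γ t) lam i j), B, mul_sum, mul_neg,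
      sum_neg_distrib, mul_add, sum_add_distrib]
    simp only [mul_comm (deriv γ t _), mul_assoc]
    rw [sum_comm (γ := Fin n), sum_comm (γ := Fin n) (f := fun _ _ => m (γ t) j _ * _)]
  have hcoord : ∀ X : ℝ → Fin (n + 1) → ℝ, (∀ α, DifferentiableAt ℝ (fun s => X s α) t) →
      X t 0 = 0 → ∀ i : Fin n,
        HasDerivAt (fun s => X s i.succ) (covD K γ X t i.succ + ∑ c, B i c * X t c.succ) t := by
    intro X hX hX0 i
    rw [← sum_connection_eq_sum_succ (fun μ α ν => K μ α ν (γ t)) (deriv γ t) (X t) hX0]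
    exact hasDerivAt_apply_covD (hX i.succ)
  have h := HasDerivAt.fun_sum fun i (_ : i ∈ univ) => HasDerivAt.fun_sum fun j (_ : j ∈ univ) =>
    ((hmass i j).fun_mul (hcoord V hV hV0 i)).fun_mul (hcoord W hW hW0 j)
  unfold spatialPairing
  rwa [sum_mass_connection_cancel _ (hsymm _) B] at h

theorem integral_eq_sub_of_contDiff_of_hasDerivAt {F f : ℝ → ℝ} (hF : ContDiff ℝ 1 F)
    (hderiv : ∀ t, HasDerivAt F (f t) t) (a b : ℝ) : ∫ t in a..b, f t = F b - F a :=
  intervalIntegral.integral_eq_sub_of_hasDerivAt (fun t _ => hderiv t)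
    (((hF.continuous_deriv le_rfl).congr fun t => (hderiv t).deriv).intervalIntegrable a b)

theorem jacobi_field_integral_formula_general (n : ℕ)
    (m : (Fin (n + 1) → ℝ) → Matrix (Fin n) (Fin n) ℝ)
    (hm : ∀ i j, ContDiff ℝ (⊤ : ℕ∞) fun x => m x i j)
    (hmpos : ∀ x, (m x).PosDef)
    (K : Fin (n + 1) → Fin (n + 1) → Fin (n + 1) → (Fin (n + 1) → ℝ) → ℝ)
    (hK : ∀ lam α ν, ContDiff ℝ (⊤ : ℕ∞) (K lam α ν))
    (hKtemp : ∀ (lam ν : Fin (n + 1)) (x : Fin (n + 1) → ℝ), K lam 0 ν x = 0)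
    (hcompat : ∀ (x : Fin (n + 1) → ℝ) (lam : Fin (n + 1)) (i j : Fin n),
      pdir (fun y => m y i j) x lam
        + ∑ k : Fin n, (m x i k * K lam k.succ j.succ x
            + m x j k * K lam k.succ i.succ x) = 0)
    (γ : ℝ → Fin (n + 1) → ℝ) (hγ : ContDiff ℝ (⊤ : ℕ∞) γ)
    (u : ℝ → Fin (n + 1) → ℝ) (hu : ContDiff ℝ (⊤ : ℕ∞) u)
    (hjacobi : ∀ (t : ℝ) (α : Fin (n + 1)), covD K γ (covD K γ u) t α =
      ∑ lam : Fin (n + 1), ∑ μ : Fin (n + 1), ∑ β : Fin (n + 1),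
        curvR K lam μ α β (γ t) * u t lam * deriv γ t μ * deriv γ t β)
    (hu0 : ∀ t, u t 0 = 0)
    (a b : ℝ) (hua : u a = 0) (hub : u b = 0) :
    ∫ t in a..b,
      ((∑ i : Fin n, ∑ j : Fin n,
          m (γ t) i j * covD K γ u t i.succ * covD K γ u t j.succ)
        + ∑ i : Fin n, ∑ j : Fin n, ∑ lam : Fin (n + 1),
            ∑ μ : Fin (n + 1), ∑ ν : Fin (n + 1),
          m (γ t) i j * curvR K lam μ i.succ ν (γ t)
            * u t lam * u t j.succ * deriv γ t μ * deriv γ t ν) = 0 := by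
  have hDu := contDiff_covD hK hγ hu
  have hsmooth : ContDiff ℝ 1 fun s => spatialPairing (m (γ s)) (covD K γ u s) (u s) :=
    (ContDiff.sum fun i _ => ContDiff.sum fun j _ => (((hm i j).comp hγ).mul
      (contDiff_pi.mp hDu _)).mul (contDiff_pi.mp hu _)).of_le (by simp)
  rw [integral_eq_sub_of_contDiff_of_hasDerivAt hsmooth fun t => ?_]
  · simp [spatialPairing, hua, hub]
  have hsymm x : (m x).IsSymm := Matrix.isHermitian_iff_isSymm.mp (hmpos x).isHermitian
  have h := hasDerivAt_spatialPairing hsymm hcompat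
    (fun i j => (hm i j).differentiable (by simp) _) (hγ.differentiable (by simp) t)
    (fun α => (contDiff_pi.mp hDu α).differentiable (by simp) t)
    (fun α => (contDiff_pi.mp hu α).differentiable (by simp) t)
    (covD_apply_zero hKtemp hu0 t) (hu0 t)
  convert h using 1
  rw [add_comm]
  congr 1
  simp only [spatialPairing, hjacobi, mul_sum, sum_mul]
  refine sum_congr rfl fun i _ => sum_congr rfl fun j _ => sum_congr rfl fun lam _ =>
    sum_congr rfl fun μ _ => sum_congr rfl fun ν _ => by ring

/-- the integral formula (995) for a Jacobi field `u` with
vanishing temporal component, vanishing at the endpoints `a < b`, along a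
geodesic `γ` (with `γ̇⁰ = 1`) of a quadratic Newtonian system with Riemannian
mass tensor `m` compatible with the connection `K`. -/
theorem jacobi_field_integral_formula (n : ℕ)
    (m : (Fin (n + 1) → ℝ) → Matrix (Fin n) (Fin n) ℝ)
    (hm : ∀ i j, ContDiff ℝ (⊤ : ℕ∞) fun x => m x i j)
    (hmpos : ∀ x, (m x).PosDef)
    (K : Fin (n + 1) → Fin (n + 1) → Fin (n + 1) → (Fin (n + 1) → ℝ) → ℝ)
    (hK : ∀ lam α ν, ContDiff ℝ (⊤ : ℕ∞) (K lam α ν))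
    (hKtemp : ∀ (lam ν : Fin (n + 1)) (x : Fin (n + 1) → ℝ), K lam 0 ν x = 0)
    (hcompat : ∀ (x : Fin (n + 1) → ℝ) (lam : Fin (n + 1)) (i j : Fin n),
      pdir (fun y => m y i j) x lam
        + ∑ k : Fin n, (m x i k * K lam k.succ j.succ x
            + m x j k * K lam k.succ i.succ x) = 0)
    (γ : ℝ → Fin (n + 1) → ℝ) (hγ : ContDiff ℝ (⊤ : ℕ∞) γ)
    (hgeo : ∀ (t : ℝ) (α : Fin (n + 1)), deriv (deriv γ) t α =
      ∑ lam : Fin (n + 1), ∑ ν : Fin (n + 1),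
        K lam α ν (γ t) * deriv γ t lam * deriv γ t ν)
    (hγ0 : ∀ t, deriv γ t 0 = 1)
    (u : ℝ → Fin (n + 1) → ℝ) (hu : ContDiff ℝ (⊤ : ℕ∞) u)
    (hjacobi : ∀ (t : ℝ) (α : Fin (n + 1)), covD K γ (covD K γ u) t α =
      ∑ lam : Fin (n + 1), ∑ μ : Fin (n + 1), ∑ β : Fin (n + 1),
        curvR K lam μ α β (γ t) * u t lam * deriv γ t μ * deriv γ t β)
    (hu0 : ∀ t, u t 0 = 0)
    (a b : ℝ) (hab : a < b) (hua : u a = 0) (hub : u b = 0) :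
    ∫ t in a..b,
      ((∑ i : Fin n, ∑ j : Fin n,
          m (γ t) i j * covD K γ u t i.succ * covD K γ u t j.succ)
        + ∑ i : Fin n, ∑ j : Fin n, ∑ lam : Fin (n + 1),
            ∑ μ : Fin (n + 1), ∑ ν : Fin (n + 1),
          m (γ t) i j * curvR K lam μ i.succ ν (γ t)
            * u t lam * u t j.succ * deriv γ t μ * deriv γ t ν) = 0 :=
  jacobi_field_integral_formula_general n m hm hmpos K hK hKtemp hcompat γ hγ u hu hjacobi hu0 a b
    hua hub
end
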